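/- Let f₀(y) = G_γ^{−1} exp(−2|y|^{γ+1}/(γ+1)) with γ ≥ 0, and let F₀ be its distribution function. Then there exist constants C > 0 and κ > 0 such that for all y ∈ ℝ: (F₀(y)−1)² ∫_{−∞}^{y} F₀(z)²/f₀(z) dz + F₀(y)² ∫_{y}^{∞} (F₀(z)−1)²/f₀(z) dz ≤ C e^{−κ|y|^{γ+1}}. -/

import Mathlib

open MeasureTheory Real

/-- Normalizing constant `G_γ`. -/
noncomputable def Gg (γ : ℝ) : ℝ :=
  (2 / (γ + 1)) ^ (γ / (γ + 1)) * Real.Gamma (1 / (γ + 1))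

/-- Density with parameters `α = 0, β = 1, σ = 1`. -/
noncomputable def f0 (γ y : ℝ) : ℝ :=
  (Gg γ)⁻¹ * Real.exp (-(2 * |y| ^ (γ + 1)) / (γ + 1))

/-- Its distribution function. -/
noncomputable def F0 (γ y : ℝ) : ℝ := ∫ z in Set.Iic y, f0 γ z

/-!
Write `f₀ = G⁻¹ e^{-4κ|z|^{γ+1}}` with `κ = 1/(2(γ+1))`. Since `f₀` is even, `F₀(-y) = 1 - F₀(y)`,
and the substitution `z ↦ -z` turns the second summand into the first one evaluated at `-y`; so it
suffices to bound `F₀(-y)² ∫_{-∞}^y F₀²/f₀` by `C e^{-κ|y|^{γ+1}}` for every `y`.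

Splitting the exponent `4κ = κ + 3κ` inside `F₀(y) = ∫_{-∞}^y f₀` gives `F₀(y) ≲ e^{-3κ|y|^{γ+1}}`
for `y ≤ 0`, hence `F₀²/f₀ ≲ e^{-2κ|z|^{γ+1}}` on the left half-line, and splitting once more,
`∫_{-∞}^y F₀²/f₀ ≲ e^{-κ|y|^{γ+1}}` for `y ≤ 0`. For `y ≥ 0` the integral over `[0, y]` is at most
`y / f₀(y) ≲ y e^{4κ y^{γ+1}}`, which the factor `F₀(-y)² ≲ e^{-6κ y^{γ+1}}` more than absorbs
because `y ≤ 1 + y^{γ+1}`.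
-/

open Set

section ExpNegMulAbsRpow

variable {p a b : ℝ}

theorem integral_exp_neg_mul_abs_rpow (hp : 0 < p) (ha : 0 < a) :
    ∫ z, exp (-a * |z| ^ p) = 2 * (a ^ (-1 / p) * Gamma (1 / p + 1)) := by
  rw [integral_comp_abs (f := fun x => exp (-a * x ^ p)), integral_exp_neg_mul_rpow hp ha]

theorem integrable_exp_neg_mul_abs_rpow (hp : 0 < p) (ha : 0 < a) :
    Integrable fun z : ℝ => exp (-a * |z| ^ p) :=
  .of_integral_ne_zero <| by
    rw [integral_exp_neg_mul_abs_rpow hp ha]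
    have := Gamma_pos_of_pos (show 0 < 1 / p + 1 by positivity)
    positivity

theorem exp_neg_mul_abs_rpow_le_of_le_of_nonpos (hp : 0 ≤ p) (ha : 0 ≤ a) {y z : ℝ}
    (hzy : z ≤ y) (hy : y ≤ 0) : exp (-a * |z| ^ p) ≤ exp (-a * |y| ^ p) := by
  have habs : |y| ≤ |z| := by
    rw [abs_of_nonpos hy, abs_of_nonpos (hzy.trans hy)]
    linarith
  exact exp_le_exp.2 (by nlinarith [rpow_le_rpow (abs_nonneg y) habs hp])

theorem setIntegral_Iic_le_of_le_exp_neg_mul_abs_rpow {g : ℝ → ℝ} {D y : ℝ} (hp : 0 < p)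
    (ha : 0 < a) (hb : 0 ≤ b) (hy : y ≤ 0) (hg_nonneg : ∀ z ≤ y, 0 ≤ g z)
    (hg : ∀ z ≤ y, g z ≤ D * exp (-(a + b) * |z| ^ p)) :
    ∫ z in Iic y, g z ≤ D * exp (-b * |y| ^ p) * ∫ z, exp (-a * |z| ^ p) := by
  have hD : 0 ≤ D := nonneg_of_mul_nonneg_left ((hg_nonneg y le_rfl).trans (hg y le_rfl))
    (exp_pos _)
  have hint := integrable_exp_neg_mul_abs_rpow hp ha
  calc ∫ z in Iic y, g z
      ≤ ∫ z in Iic y, D * exp (-b * |y| ^ p) * exp (-a * |z| ^ p) := by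
        refine integral_mono_of_nonneg ?_ (hint.integrableOn.const_mul _) ?_ <;>
          filter_upwards [ae_restrict_mem measurableSet_Iic] with z hz
        · exact hg_nonneg z hz
        calc g z ≤ D * exp (-(a + b) * |z| ^ p) := hg z hz
          _ = D * exp (-b * |z| ^ p) * exp (-a * |z| ^ p) := by
            rw [mul_assoc, ← exp_add]; ring_nf
          _ ≤ D * exp (-b * |y| ^ p) * exp (-a * |z| ^ p) := by
            have := exp_neg_mul_abs_rpow_le_of_le_of_nonpos hp.le hb hz hy
            gcongr
    _ = D * exp (-b * |y| ^ p) * ∫ z in Iic y, exp (-a * |z| ^ p) := integral_const_mul _ _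
    _ ≤ D * exp (-b * |y| ^ p) * ∫ z, exp (-a * |z| ^ p) :=
        mul_le_mul_of_nonneg_left
          (setIntegral_le_integral hint (.of_forall fun z => (exp_pos _).le)) (by positivity)

theorem mul_exp_neg_mul_le (ha : 0 < a) (t : ℝ) : t * exp (-(a * t)) ≤ a⁻¹ := by
  have h : a * t * exp (-(a * t)) ≤ 1 :=
    calc a * t * exp (-(a * t)) ≤ exp (a * t) * exp (-(a * t)) :=
          mul_le_mul_of_nonneg_right (by linarith [add_one_le_exp (a * t)]) (exp_pos _).le
      _ = 1 := by rw [← exp_add, add_neg_cancel, exp_zero]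
  have := mul_le_mul_of_nonneg_left h (inv_nonneg.2 ha.le)
  rwa [mul_one, ← mul_assoc, ← mul_assoc, inv_mul_cancel₀ ha.ne', one_mul] at this

theorem one_add_mul_exp_neg_two_mul_le (ha : 0 < a) {t : ℝ} (ht : 0 ≤ t) :
    (1 + t) * exp (-(2 * a) * t) ≤ (1 + a⁻¹) * exp (-a * t) := by
  have hE : exp (-a * t) ≤ 1 := exp_le_one_iff.2 (by nlinarith)
  have htE : t * exp (-a * t) ≤ a⁻¹ := by simpa only [neg_mul] using mul_exp_neg_mul_le ha t
  have hsq : exp (-(2 * a) * t) = exp (-a * t) * exp (-a * t) := by rw [← exp_add]; ring_nf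
  rw [hsq]
  nlinarith [exp_pos (-a * t)]

theorem le_one_add_rpow {y : ℝ} (hy : 0 ≤ y) (hp : 1 ≤ p) : y ≤ 1 + y ^ p := by
  rcases le_total y 1 with h | h
  · linarith [rpow_nonneg hy p]
  · linarith [self_le_rpow_of_one_le h hp]

end ExpNegMulAbsRpow

noncomputable def tailRate (γ : ℝ) : ℝ := (γ + 1)⁻¹ / 2

section

variable {γ : ℝ}

theorem tailRate_pos (hγ : -1 < γ) : 0 < tailRate γ :=
  half_pos (inv_pos.2 (by linarith))

theorem four_mul_tailRate (γ : ℝ) : 4 * tailRate γ = 2 / (γ + 1) := by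
  unfold tailRate
  ring

theorem Gg_pos (hγ : -1 < γ) : 0 < Gg γ := by
  have : 0 < γ + 1 := by linarith
  exact mul_pos (rpow_pos_of_pos (by positivity) _) (Gamma_pos_of_pos (by positivity))

theorem f0_eq (γ z : ℝ) : f0 γ z = (Gg γ)⁻¹ * exp (-(4 * tailRate γ) * |z| ^ (γ + 1)) := by
  rw [f0, four_mul_tailRate]
  ring_nf

theorem f0_pos (hγ : -1 < γ) (z : ℝ) : 0 < f0 γ z :=
  mul_pos (inv_pos.2 (Gg_pos hγ)) (exp_pos _)

theorem f0_neg (γ z : ℝ) : f0 γ (-z) = f0 γ z := by simp [f0]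

theorem measurable_f0 (γ : ℝ) : Measurable (f0 γ) := by
  unfold f0
  fun_prop

theorem integral_f0 (hγ : -1 < γ) : ∫ z, f0 γ z = 1 := by
  have hp : 0 < γ + 1 := by linarith
  simp_rw [f0_eq, integral_const_mul]
  rw [integral_exp_neg_mul_abs_rpow hp (by linarith [tailRate_pos hγ]),
    Gamma_add_one (by positivity), inv_mul_eq_one₀ (Gg_pos hγ).ne', four_mul_tailRate, Gg,
    show γ / (γ + 1) = 1 + -1 / (γ + 1) by field_simp; ring, rpow_add (by positivity), rpow_one]
  ring

theorem integrable_f0 (hγ : -1 < γ) : Integrable (f0 γ) := by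
  rw [funext (f0_eq γ)]
  exact (integrable_exp_neg_mul_abs_rpow (by linarith) (by linarith [tailRate_pos hγ])).const_mul _

theorem F0_nonneg (hγ : -1 < γ) (y : ℝ) : 0 ≤ F0 γ y :=
  setIntegral_nonneg measurableSet_Iic fun z _ => (f0_pos hγ z).le

theorem F0_le_one (hγ : -1 < γ) (y : ℝ) : F0 γ y ≤ 1 :=
  integral_f0 hγ ▸ setIntegral_le_integral (integrable_f0 hγ) (.of_forall fun z => (f0_pos hγ z).le)

theorem monotone_F0 (hγ : -1 < γ) : Monotone (F0 γ) := fun _ _ hab =>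
  setIntegral_mono_set (integrable_f0 hγ).integrableOn (.of_forall fun z => (f0_pos hγ z).le)
    (Iic_subset_Iic.2 hab).eventuallyLE

theorem F0_neg (hγ : -1 < γ) (y : ℝ) : F0 γ (-y) = 1 - F0 γ y := by
  have h := integral_add_compl (measurableSet_Iic (a := y)) (integrable_f0 hγ)
  rw [compl_Iic, integral_f0 hγ] at h
  rw [F0, ← integral_comp_neg_Ioi]
  simp only [f0_neg]
  rw [F0]
  linarith

theorem F0_le_exp_of_nonpos (hγ : -1 < γ) :
    ∃ K, ∀ y ≤ 0, F0 γ y ≤ K * exp (-(3 * tailRate γ) * |y| ^ (γ + 1)) := by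
  have hκ := tailRate_pos hγ
  refine ⟨(Gg γ)⁻¹ * ∫ z, exp (-tailRate γ * |z| ^ (γ + 1)), fun y hy => ?_⟩
  refine (setIntegral_Iic_le_of_le_exp_neg_mul_abs_rpow (p := γ + 1) (a := tailRate γ)
    (b := 3 * tailRate γ) (D := (Gg γ)⁻¹) (by linarith) hκ (by positivity) hy
    (fun z _ => (f0_pos hγ z).le) (fun z _ => ((f0_eq γ z).trans (by ring_nf)).le)).trans_eq
    (by ring)

theorem F0_sq_div_f0_nonneg (hγ : -1 < γ) (z : ℝ) : 0 ≤ F0 γ z ^ 2 / f0 γ z :=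
  div_nonneg (sq_nonneg _) (f0_pos hγ z).le

theorem F0_sq_div_f0_le_inv (hγ : -1 < γ) (z : ℝ) : F0 γ z ^ 2 / f0 γ z ≤ (f0 γ z)⁻¹ := by
  rw [div_eq_mul_inv]
  exact mul_le_of_le_one_left (inv_nonneg.2 (f0_pos hγ z).le)
    (pow_le_one₀ (F0_nonneg hγ z) (F0_le_one hγ z))

theorem inv_f0_le (hγ : -1 < γ) {y z : ℝ} (hzy : |z| ≤ |y|) :
    (f0 γ z)⁻¹ ≤ Gg γ * exp (4 * tailRate γ * |y| ^ (γ + 1)) := by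
  have := rpow_le_rpow (abs_nonneg z) hzy (show 0 ≤ γ + 1 by linarith)
  have := Gg_pos hγ
  rw [f0_eq, mul_inv, inv_inv, ← exp_neg]
  gcongr
  nlinarith [tailRate_pos hγ]

theorem F0_sq_div_f0_le_exp_of_nonpos (hγ : -1 < γ) :
    ∃ D, ∀ z ≤ 0, F0 γ z ^ 2 / f0 γ z ≤ D * exp (-(2 * tailRate γ) * |z| ^ (γ + 1)) := by
  obtain ⟨K, hK⟩ := F0_le_exp_of_nonpos hγ
  refine ⟨Gg γ * K ^ 2, fun z hz => ?_⟩
  have hG := (Gg_pos hγ).ne'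
  have hexp : exp (-(3 * tailRate γ) * |z| ^ (γ + 1)) ^ 2 =
      exp (-(2 * tailRate γ) * |z| ^ (γ + 1)) * exp (-(4 * tailRate γ) * |z| ^ (γ + 1)) := by
    rw [sq, ← exp_add, ← exp_add]
    ring_nf
  rw [div_le_iff₀ (f0_pos hγ z), f0_eq]
  calc F0 γ z ^ 2 ≤ (K * exp (-(3 * tailRate γ) * |z| ^ (γ + 1))) ^ 2 :=
        pow_le_pow_left₀ (F0_nonneg hγ z) (hK z hz) 2
    _ = Gg γ * K ^ 2 * exp (-(2 * tailRate γ) * |z| ^ (γ + 1)) *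
          ((Gg γ)⁻¹ * exp (-(4 * tailRate γ) * |z| ^ (γ + 1))) := by
        rw [mul_pow, hexp]
        field_simp

theorem integrableOn_F0_sq_div_f0 (hγ : -1 < γ) (y : ℝ) :
    IntegrableOn (fun z => F0 γ z ^ 2 / f0 γ z) (Iic y) := by
  have hmeas : Measurable fun z => F0 γ z ^ 2 / f0 γ z :=
    ((monotone_F0 hγ).measurable.pow_const 2).div (measurable_f0 γ)
  obtain ⟨D, hD⟩ := F0_sq_div_f0_le_exp_of_nonpos hγ
  have hnonpos : IntegrableOn (fun z => F0 γ z ^ 2 / f0 γ z) (Iic 0) := by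
    have hdom := (integrable_exp_neg_mul_abs_rpow (p := γ + 1) (a := 2 * tailRate γ)
      (by linarith) (by linarith [tailRate_pos hγ])).const_mul D
    refine hdom.integrableOn.mono' hmeas.aestronglyMeasurable ?_
    filter_upwards [ae_restrict_mem measurableSet_Iic] with z hz
    rw [norm_of_nonneg (F0_sq_div_f0_nonneg hγ z)]
    exact hD z hz
  have hnonneg : IntegrableOn (fun z => F0 γ z ^ 2 / f0 γ z) (Icc 0 y) := by
    refine .of_bound measure_Icc_lt_top hmeas.aestronglyMeasurable
      (Gg γ * exp (4 * tailRate γ * |y| ^ (γ + 1))) ?_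
    filter_upwards [ae_restrict_mem measurableSet_Icc] with z hz
    rw [norm_of_nonneg (F0_sq_div_f0_nonneg hγ z)]
    refine (F0_sq_div_f0_le_inv hγ z).trans (inv_f0_le hγ ?_)
    rw [abs_of_nonneg hz.1, abs_of_nonneg (hz.1.trans hz.2)]
    exact hz.2
  exact (hnonpos.union hnonneg).mono_set Iic_subset_Iic_union_Icc

theorem setIntegral_F0_sq_div_f0_le_exp_of_nonpos (hγ : -1 < γ) :
    ∃ D, ∀ y ≤ 0,
      ∫ z in Iic y, F0 γ z ^ 2 / f0 γ z ≤ D * exp (-tailRate γ * |y| ^ (γ + 1)) := by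
  have hκ := tailRate_pos hγ
  obtain ⟨D, hD⟩ := F0_sq_div_f0_le_exp_of_nonpos hγ
  refine ⟨D * ∫ z, exp (-tailRate γ * |z| ^ (γ + 1)), fun y hy => ?_⟩
  refine (setIntegral_Iic_le_of_le_exp_neg_mul_abs_rpow (p := γ + 1) (a := tailRate γ)
    (b := tailRate γ) (D := D) (by linarith) hκ hκ.le hy
    (fun z _ => F0_sq_div_f0_nonneg hγ z)
    (fun z hz => (hD z (hz.trans hy)).trans_eq (by ring_nf))).trans_eq (by ring)

theorem setIntegral_F0_sq_div_f0_le_add (hγ : -1 < γ) {y : ℝ} (hy : 0 ≤ y) :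
    ∫ z in Iic y, F0 γ z ^ 2 / f0 γ z ≤
      (∫ z in Iic 0, F0 γ z ^ 2 / f0 γ z) + Gg γ * exp (4 * tailRate γ * |y| ^ (γ + 1)) * y := by
  rw [← Iic_union_Ioc_eq_Iic hy, setIntegral_union (Iic_disjoint_Ioc le_rfl) measurableSet_Ioc
    (integrableOn_F0_sq_div_f0 hγ 0)
    ((integrableOn_F0_sq_div_f0 hγ y).mono_set Ioc_subset_Iic_self)]
  gcongr
  have h := norm_setIntegral_le_of_norm_le_const (f := fun z => F0 γ z ^ 2 / f0 γ z)
    (measure_Ioc_lt_top (μ := volume) (a := 0) (b := y)) fun z hz => by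
      rw [norm_of_nonneg (F0_sq_div_f0_nonneg hγ z)]
      refine (F0_sq_div_f0_le_inv hγ z).trans (inv_f0_le hγ (y := y) ?_)
      rw [abs_of_nonneg hz.1.le, abs_of_nonneg hy]
      exact hz.2
  rw [Real.volume_real_Ioc_of_le hy, sub_zero] at h
  exact (le_abs_self _).trans h

theorem F0_neg_sq_mul_setIntegral_le_of_nonneg (hγ : 0 ≤ γ) :
    ∃ C, ∀ y, 0 ≤ y → F0 γ (-y) ^ 2 * ∫ z in Iic y, F0 γ z ^ 2 / f0 γ z ≤
      C * exp (-tailRate γ * |y| ^ (γ + 1)) := by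
  have hγ' : -1 < γ := by linarith
  have hκ := tailRate_pos hγ'
  have hG := Gg_pos hγ'
  obtain ⟨K, hK⟩ := F0_le_exp_of_nonpos hγ'
  set κ := tailRate γ
  set A₀ := ∫ z in Iic 0, F0 γ z ^ 2 / f0 γ z
  have hA₀ : 0 ≤ A₀ := setIntegral_nonneg measurableSet_Iic fun z _ => F0_sq_div_f0_nonneg hγ' z
  refine ⟨K ^ 2 * (A₀ + Gg γ * (1 + κ⁻¹)), fun y hy => ?_⟩
  set t := |y| ^ (γ + 1)
  have ht : 0 ≤ t := by positivity
  have hyt : y ≤ 1 + t := by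
    simpa only [t, abs_of_nonneg hy] using le_one_add_rpow hy (by linarith : 1 ≤ γ + 1)
  have hF : F0 γ (-y) ^ 2 ≤ K ^ 2 * exp (-(6 * κ) * t) := by
    have h := pow_le_pow_left₀ (F0_nonneg hγ' _) (hK (-y) (by linarith)) 2
    rwa [abs_neg, mul_pow, ← exp_nat_mul, show ((2 : ℕ) : ℝ) * (-(3 * κ) * t) = -(6 * κ) * t by
      push_cast; ring] at h
  have hA : ∫ z in Iic y, F0 γ z ^ 2 / f0 γ z ≤ A₀ + Gg γ * exp (4 * κ * t) * (1 + t) :=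
    (setIntegral_F0_sq_div_f0_le_add hγ' hy).trans (by gcongr)
  have hexp : exp (-(6 * κ) * t) * exp (4 * κ * t) = exp (-(2 * κ) * t) := by
    rw [← exp_add]
    ring_nf
  have hE6 : exp (-(6 * κ) * t) ≤ exp (-κ * t) := exp_le_exp.2 (by nlinarith)
  calc F0 γ (-y) ^ 2 * ∫ z in Iic y, F0 γ z ^ 2 / f0 γ z
      ≤ K ^ 2 * exp (-(6 * κ) * t) * (A₀ + Gg γ * exp (4 * κ * t) * (1 + t)) :=
        mul_le_mul hF hA (setIntegral_nonneg measurableSet_Iic fun z _ =>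
          F0_sq_div_f0_nonneg hγ' z) (by positivity)
    _ = K ^ 2 * (A₀ * exp (-(6 * κ) * t) + Gg γ * ((1 + t) * exp (-(2 * κ) * t))) := by
        linear_combination K ^ 2 * Gg γ * (1 + t) * hexp
    _ ≤ K ^ 2 * (A₀ * exp (-κ * t) + Gg γ * ((1 + κ⁻¹) * exp (-κ * t))) := by
        have := one_add_mul_exp_neg_two_mul_le hκ ht
        gcongr
    _ = K ^ 2 * (A₀ + Gg γ * (1 + κ⁻¹)) * exp (-κ * t) := by ring

theorem F0_neg_sq_mul_setIntegral_le (hγ : 0 ≤ γ) :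
    ∃ C, ∀ y, F0 γ (-y) ^ 2 * ∫ z in Iic y, F0 γ z ^ 2 / f0 γ z ≤
      C * exp (-tailRate γ * |y| ^ (γ + 1)) := by
  have hγ' : -1 < γ := by linarith
  obtain ⟨C₁, hC₁⟩ := setIntegral_F0_sq_div_f0_le_exp_of_nonpos hγ'
  obtain ⟨C₂, hC₂⟩ := F0_neg_sq_mul_setIntegral_le_of_nonneg hγ
  refine ⟨max C₁ C₂, fun y => ?_⟩
  have hE := exp_pos (-tailRate γ * |y| ^ (γ + 1))
  rcases le_total y 0 with hy | hy
  · have hF : F0 γ (-y) ^ 2 ≤ 1 := pow_le_one₀ (F0_nonneg hγ' _) (F0_le_one hγ' _)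
    have hA : 0 ≤ ∫ z in Iic y, F0 γ z ^ 2 / f0 γ z :=
      setIntegral_nonneg measurableSet_Iic fun z _ => F0_sq_div_f0_nonneg hγ' z
    nlinarith [hC₁ y hy, le_max_left C₁ C₂]
  · nlinarith [hC₂ y hy, le_max_right C₁ C₂]

theorem setIntegral_Ici_sub_one_sq_div_f0 (hγ : -1 < γ) (y : ℝ) :
    ∫ z in Ici y, (F0 γ z - 1) ^ 2 / f0 γ z = ∫ z in Iic (-y), F0 γ z ^ 2 / f0 γ z := by
  rw [integral_Ici_eq_integral_Ioi, ← integral_comp_neg_Ioi]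
  refine setIntegral_congr_fun measurableSet_Ioi fun z _ => ?_
  rw [F0_neg hγ, f0_neg]
  ring

end

/-- exponential bound for the tail functional of `F₀`. -/
theorem stmt_3 (γ : ℝ) (hγ : 0 ≤ γ) :
    ∃ C > (0 : ℝ), ∃ κ > (0 : ℝ), ∀ y : ℝ,
      (F0 γ y - 1) ^ 2 * (∫ z in Set.Iic y, (F0 γ z) ^ 2 / f0 γ z) +
        (F0 γ y) ^ 2 * (∫ z in Set.Ici y, (F0 γ z - 1) ^ 2 / f0 γ z) ≤
      C * Real.exp (-κ * |y| ^ (γ + 1)) := by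
  have hγ' : -1 < γ := by linarith
  obtain ⟨C, hC⟩ := F0_neg_sq_mul_setIntegral_le hγ
  refine ⟨2 * max C 1, by positivity, tailRate γ, tailRate_pos hγ', fun y => ?_⟩
  have hy := hC y
  have hy' := hC (-y)
  rw [neg_neg, abs_neg] at hy'
  rw [setIntegral_Ici_sub_one_sq_div_f0 hγ', show (F0 γ y - 1) ^ 2 = F0 γ (-y) ^ 2 by
    rw [F0_neg hγ']; ring]
  nlinarith [le_max_left C 1, exp_pos (-tailRate γ * |y| ^ (γ + 1))]
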